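/- Let $J \geq 1$ be an integer and $c > 0$. If $Z \sim \mathrm{Gamma}(J, c)$ (density $\frac{c^J}{\Gamma(J)}z^{J-1}e^{-cz}$), then for $\alpha = \beta = 1$, $\int_0^\infty \left(\frac{1+J}{1+z} - c\right)^2 \frac{1}{\Gamma(J)} z^{J-1} e^{-cz} c^J\, dz$ evaluated at $c = 1$ equals $(J+1)^2 + 1 - (J+1)e\,(J^2 + J + 2)E_J(1)$, where $E_J(x) = \int_1^\infty \frac{e^{-xz}}{z^J}dz$ is the generalized exponential integral. -/

import Mathlib

open MeasureTheory Set Filter Real Topology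
open scoped Nat

/-!
Write `J = n + 1` and `I n k = ∫₀^∞ zⁿ e^{-z} / (1 + z)ᵏ dz`. Expanding the square, the Bayes risk
is `((J + 1)² I n 2 - 2 (J + 1) I n 1 + I n 0) / n!`. Integration by parts gives
`I n 2 = n! - J · I n 1`, and `I n 1 = n! · I 0 J` because, after division by `n!`, both sides
satisfy the recursion `(n + 1) aₙ₊₁ = 1 - aₙ` and agree at `n = 0`. Finally the shift `z ↦ z + 1` turns `I 0 J`
into `e · E_J(1)`.
-/

/-- Generalized exponential integral `E_J(x) = ∫_1^∞ e^(-x z) / z^J dz`. -/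
noncomputable def genExpIntegral (J : ℕ) (x : ℝ) : ℝ :=
  ∫ z in Set.Ioi (1:ℝ), Real.exp (-x * z) / z ^ J

noncomputable def powExpDiv (n k : ℕ) (z : ℝ) : ℝ :=
  z ^ n * rexp (-z) / (1 + z) ^ k

noncomputable def powExpDivIntegral (n k : ℕ) : ℝ :=
  ∫ z in Ioi 0, powExpDiv n k z

lemma integrableOn_powExpDiv (n k : ℕ) : IntegrableOn (powExpDiv n k) (Ioi 0) := by
  have hGamma : IntegrableOn (fun z : ℝ => z ^ n * rexp (-z)) (Ioi 0) := by
    refine (Real.GammaIntegral_convergent (s := (n : ℝ) + 1) (by positivity)).congr_fun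
      (fun z _ => ?_) measurableSet_Ioi
    simp only [add_sub_cancel_right, Real.rpow_natCast, mul_comm]
  refine hGamma.mono' ?_ (ae_restrict_of_forall_mem measurableSet_Ioi fun z (hz : 0 < z) => ?_)
  · exact (ContinuousOn.div (by fun_prop) (by fun_prop) fun z (hz : 0 < z) =>
      (pow_pos (by linarith) k).ne') |>.aestronglyMeasurable measurableSet_Ioi
  · have hnum : 0 ≤ z ^ n * rexp (-z) := mul_nonneg (pow_pos hz n).le (exp_pos _).le
    rw [powExpDiv, Real.norm_of_nonneg (div_nonneg hnum (pow_pos (by linarith) k).le)]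
    exact div_le_self hnum (one_le_pow₀ (by linarith))

lemma powExpDivIntegral_zero_right (n : ℕ) : powExpDivIntegral n 0 = (n ! : ℝ) := by
  rw [← Real.Gamma_nat_eq_factorial, ← Nat.cast_succ,
    Real.Gamma_eq_integral (by positivity), powExpDivIntegral]
  refine setIntegral_congr_fun measurableSet_Ioi fun z _ => ?_
  simp only [powExpDiv, pow_zero, div_one, Nat.cast_succ, add_sub_cancel_right,
    Real.rpow_natCast, mul_comm]

lemma powExpDivIntegral_succ_one (n : ℕ) :
    powExpDivIntegral (n + 1) 1 = (n ! : ℝ) - powExpDivIntegral n 1 := by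
  have hsplit : EqOn (powExpDiv (n + 1) 1) (fun z => powExpDiv n 0 z - powExpDiv n 1 z) (Ioi 0) :=
    fun z (hz : 0 < z) => by
      have : 1 + z ≠ 0 := by linarith
      simp only [powExpDiv]
      field_simp
      ring
  rw [powExpDivIntegral, setIntegral_congr_fun measurableSet_Ioi hsplit,
    integral_sub (integrableOn_powExpDiv n 0) (integrableOn_powExpDiv n 1),
    ← powExpDivIntegral, ← powExpDivIntegral, powExpDivIntegral_zero_right]

/-- `-e^{-z} / (1 + z)^(m + 1)` is an antiderivative of the left-hand integrand. -/
lemma powExpDivIntegral_zero_succ_add (m : ℕ) :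
    powExpDivIntegral 0 (m + 1) + (m + 1) * powExpDivIntegral 0 (m + 2) = 1 := by
  set F : ℝ → ℝ := fun z => -rexp (-z) / (1 + z) ^ (m + 1)
  have hderiv : ∀ z ∈ Ici (0 : ℝ),
      HasDerivAt F (powExpDiv 0 (m + 1) z + (m + 1) * powExpDiv 0 (m + 2) z) z := by
    intro z (hz : 0 ≤ z)
    have h1z : 1 + z ≠ 0 := by linarith
    have hexp := (hasDerivAt_neg z).exp.fun_neg
    have hpow := ((hasDerivAt_id' z).const_add 1).fun_pow (m + 1)
    refine (hexp.fun_div hpow (pow_ne_zero _ h1z)).congr_deriv ?_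
    rw [Nat.add_sub_cancel]
    simp only [powExpDiv]
    field_simp
    push_cast
    ring
  have hint1 := integrableOn_powExpDiv 0 (m + 1)
  have hint2 := (integrableOn_powExpDiv 0 (m + 2)).const_mul ((m : ℝ) + 1)
  have hnum : Tendsto (fun z => -rexp (-z)) atTop (𝓝 0) := by
    simpa using Real.tendsto_exp_neg_atTop_nhds_zero.neg
  have hlim : Tendsto F atTop (𝓝 0) :=
    hnum.div_atTop
      ((tendsto_pow_atTop m.succ_ne_zero).comp (tendsto_atTop_add_const_left _ 1 tendsto_id))
  have hFTC := integral_Ioi_of_hasDerivAt_of_tendsto' hderiv (hint1.add hint2) hlim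
  rw [integral_add hint1 hint2, integral_const_mul] at hFTC
  simpa [F, powExpDivIntegral] using hFTC

lemma powExpDivIntegral_one (n : ℕ) :
    powExpDivIntegral n 1 = (n ! : ℝ) * powExpDivIntegral 0 (n + 1) := by
  induction n with
  | zero => simp
  | succ n ih =>
    rw [powExpDivIntegral_succ_one, ih, Nat.factorial_succ]
    push_cast
    linear_combination -(n ! : ℝ) * powExpDivIntegral_zero_succ_add n

/-- `z^(n + 1) e^{-z} / (1 + z)` vanishes at `0` and `∞` and is an antiderivative of
`zⁿ e^{-z} ((1 + z)⁻² + (n + 1) (1 + z)⁻¹ - 1)`. -/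
lemma powExpDivIntegral_two (n : ℕ) :
    powExpDivIntegral n 2 = (n ! : ℝ) - (n + 1) * powExpDivIntegral n 1 := by
  set G : ℝ → ℝ := fun z => z ^ (n + 1) * rexp (-z) / (1 + z)
  have hderiv : ∀ z ∈ Ici (0 : ℝ), HasDerivAt G
      (powExpDiv n 2 z + (n + 1) * powExpDiv n 1 z - powExpDiv n 0 z) z := by
    intro z (hz : 0 ≤ z)
    have h1z : 1 + z ≠ 0 := by linarith
    have hnum := (hasDerivAt_pow (n + 1) z).fun_mul (hasDerivAt_neg z).exp
    refine (hnum.fun_div ((hasDerivAt_id' z).const_add 1) h1z).congr_deriv ?_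
    rw [Nat.add_sub_cancel]
    simp only [powExpDiv]
    field_simp
    push_cast
    ring
  have hint0 := integrableOn_powExpDiv n 0
  have hint1 := (integrableOn_powExpDiv n 1).const_mul ((n : ℝ) + 1)
  have hint2 := integrableOn_powExpDiv n 2
  have hlim : Tendsto G atTop (𝓝 0) :=
    (tendsto_pow_mul_exp_neg_atTop_nhds_zero (n + 1)).div_atTop
      (tendsto_atTop_add_const_left _ 1 tendsto_id)
  have hFTC := integral_Ioi_of_hasDerivAt_of_tendsto' hderiv ((hint2.add hint1).sub hint0) hlim
  rw [integral_sub (f := fun z => powExpDiv n 2 z + (n + 1) * powExpDiv n 1 z)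
    (hint2.add hint1) hint0, integral_add hint2 hint1, integral_const_mul] at hFTC
  rw [← powExpDivIntegral_zero_right]
  norm_num [G] at hFTC
  unfold powExpDivIntegral
  linarith

lemma genExpIntegral_one_eq (m : ℕ) : genExpIntegral m 1 = rexp (-1) * powExpDivIntegral 0 m := by
  have hshift := (measurePreserving_add_right (volume : Measure ℝ) 1).setIntegral_preimage_emb
    (measurableEmbedding_addRight 1) (fun z => rexp (-1 * z) / z ^ m) (Ioi 1)
  rw [preimage_add_const_Ioi, sub_self] at hshift
  rw [genExpIntegral, ← hshift, powExpDivIntegral, ← integral_const_mul]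
  refine setIntegral_congr_fun measurableSet_Ioi fun z _ => ?_
  rw [powExpDiv, pow_zero, one_mul, mul_div_assoc', ← Real.exp_add, add_comm z]
  ring_nf

lemma integral_sq_div_one_add_sub_one_mul_gammaPDF (n : ℕ) (a : ℝ) :
    (∫ z in Ioi (0 : ℝ), (a / (1 + z) - 1) ^ 2 * (1 / Real.Gamma ((n + 1 : ℕ) : ℝ)) *
        z ^ (((n + 1 : ℕ) : ℝ) - 1) * rexp (-z)) =
      (a ^ 2 * powExpDivIntegral n 2 - 2 * a * powExpDivIntegral n 1 + powExpDivIntegral n 0) /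
        (n ! : ℝ) := by
  have hexpand : EqOn
      (fun z => (a / (1 + z) - 1) ^ 2 * (1 / Real.Gamma ((n + 1 : ℕ) : ℝ)) *
        z ^ (((n + 1 : ℕ) : ℝ) - 1) * rexp (-z))
      (fun z => (n ! : ℝ)⁻¹ *
        (a ^ 2 * powExpDiv n 2 z - 2 * a * powExpDiv n 1 z + powExpDiv n 0 z)) (Ioi 0) :=
    fun z (hz : 0 < z) => by
      have h1z : 1 + z ≠ 0 := by linarith
      simp only [powExpDiv, Real.Gamma_nat_eq_factorial, Nat.cast_succ, add_sub_cancel_right,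
        Real.rpow_natCast]
      field_simp
      ring
  have hint2 := (integrableOn_powExpDiv n 2).const_mul (a ^ 2)
  have hint1 := (integrableOn_powExpDiv n 1).const_mul (2 * a)
  rw [setIntegral_congr_fun measurableSet_Ioi hexpand, integral_const_mul,
    integral_add (f := fun z => a ^ 2 * powExpDiv n 2 z - 2 * a * powExpDiv n 1 z)
      (hint2.sub hint1) (integrableOn_powExpDiv n 0),
    integral_sub hint2 hint1, integral_const_mul, integral_const_mul, inv_mul_eq_div]
  rfl

theorem bayes_risk_at_c_one (J : ℕ) (hJ : 1 ≤ J) :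
    (∫ z in Set.Ioi (0:ℝ),
        ((1 + (J : ℝ)) / (1 + z) - 1) ^ 2 *
          (1 / Real.Gamma J) * z ^ ((J : ℝ) - 1) * Real.exp (-z)) =
      ((J : ℝ) + 1) ^ 2 + 1 -
        ((J : ℝ) + 1) * Real.exp 1 * ((J : ℝ) ^ 2 + (J : ℝ) + 2) * genExpIntegral J 1 := by
  obtain ⟨n, rfl⟩ : ∃ n, J = n + 1 := ⟨J - 1, by omega⟩
  rw [integral_sq_div_one_add_sub_one_mul_gammaPDF, powExpDivIntegral_two,
    powExpDivIntegral_zero_right, powExpDivIntegral_one, genExpIntegral_one_eq, Real.exp_neg]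
  have : (n ! : ℝ) ≠ 0 := by positivity
  field_simp
  push_cast
  ring
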